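/- arXiv:1812.00368 — 2 statements merged into one kernel-verified Lean document; each statement's English description precedes it below -/
import Mathlib

section
/- Let H be a skew type Hadamard matrix of order n, let α ∈ F_q, and let G = [H + α·I_n | I_n] over F_q. If n + (α+1)² ≠ 0 in F_q, then G generates an LCD code C of length 2n and dimension n over F_q. Moreover, if in addition n − 1 + (α+1)² ≠ 0 in F_q and β ∈ F_q satisfies β + (α+1)² + n − 1 = 0, then Ḡ = [H + α·I_n | β·I_n] generates the dual code C⊥. -/
/-!
For skew Hadamard `H`, the matrix `A = H + αI` satisfies `AAᵀ = HHᵀ + α(H + Hᵀ) + α²I =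
(n - 1 + (α + 1)²) I`, so `G = [A | I]` has `GGᵀ = (n + (α + 1)²) I`, which is invertible.
Since `G (xG)ᵀ = x GGᵀ`, a codeword `xG` orthogonal to every row of `G` vanishes, and `x ↦ xG`
is injective. The dual of the row span of `[A | I]` is the row span of `[I | -Aᵀ]`, and left
multiplication by the invertible `A` turns the latter into `[A | -AAᵀ] = [A | βI]`.
-/

open Matrix BigOperators

/-- The row span of a matrix `G`: the linear code generated by the rows of `G`. -/
def rowSpan (F : Type*) [Field F] {k ι : Type*} (G : Matrix k ι F) : Submodule F (ι → F) :=
  Submodule.span F (Set.range fun i => G i)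

/-- The dual of a linear code under the standard dot product. -/
def dualCode {F : Type*} [Field F] {ι : Type*} [Fintype ι] (C : Submodule F (ι → F)) :
    Submodule F (ι → F) where
  carrier := {v | ∀ c ∈ C, v ⬝ᵥ c = 0}
  add_mem' := by
    intro a b ha hb c hc
    rw [add_dotProduct, ha c hc, hb c hc, add_zero]
  zero_mem' := by
    intro c hc
    rw [zero_dotProduct]
  smul_mem' := by
    intro r a ha c hc
    rw [smul_dotProduct, ha c hc, smul_zero]

/-- A linear code is LCD (linear complementary dual) if it meets its dual trivially. -/
def IsLCD {F : Type*} [Field F] {ι : Type*} [Fintype ι] (C : Submodule F (ι → F)) : Prop :=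
  C ⊓ dualCode C = ⊥

section Codes

variable {F : Type*} [Field F] {k ι : Type*} [Fintype k]

theorem rowSpan_eq_range_vecMulLinear (G : Matrix k ι F) :
    rowSpan F G = LinearMap.range G.vecMulLinear :=
  (range_vecMulLinear G).symm

theorem rowSpan_mul_of_isUnit [DecidableEq k] {P : Matrix k k F} (hP : IsUnit P)
    (M : Matrix k ι F) : rowSpan F (P * M) = rowSpan F M := by
  have hcomp : (P * M).vecMulLinear = M.vecMulLinear ∘ₗ P.vecMulLinear :=
    LinearMap.ext fun x => (vecMul_vecMul x P M).symm
  have hsurj : LinearMap.range P.vecMulLinear = ⊤ :=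
    LinearMap.range_eq_top.mpr (vecMul_surjective_iff_isUnit.mpr hP)
  rw [rowSpan_eq_range_vecMulLinear, rowSpan_eq_range_vecMulLinear, hcomp,
    LinearMap.range_comp_of_range_eq_top _ hsurj]

variable [Fintype ι]

theorem mem_dualCode_rowSpan_iff (G : Matrix k ι F) (v : ι → F) :
    v ∈ dualCode (rowSpan F G) ↔ G *ᵥ v = 0 := by
  change (∀ c ∈ rowSpan F G, v ⬝ᵥ c = 0) ↔ _
  simp only [rowSpan_eq_range_vecMulLinear, LinearMap.mem_range, vecMulLinear_apply,
    forall_exists_index, forall_apply_eq_imp_iff]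
  simp_rw [dotProduct_comm v, ← dotProduct_mulVec, dotProduct_comm _ (G *ᵥ v)]
  exact dotProduct_eq_zero_iff

theorem mulVec_vecMul_self (G : Matrix k ι F) (x : k → F) :
    G *ᵥ (x ᵥ* G) = x ᵥ* (G * Gᵀ) := by
  rw [← vecMul_transpose, vecMul_vecMul]

theorem vecMul_injective_of_isUnit_mul_transpose [DecidableEq k] {G : Matrix k ι F}
    (hG : IsUnit (G * Gᵀ)) : Function.Injective G.vecMul := fun x y hxy => by
  apply vecMul_injective_iff_isUnit.mpr hG
  simp only [← mulVec_vecMul_self, hxy]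

theorem isLCD_rowSpan_of_isUnit_mul_transpose [DecidableEq k] {G : Matrix k ι F}
    (hG : IsUnit (G * Gᵀ)) : IsLCD (rowSpan F G) := by
  rw [IsLCD, Submodule.eq_bot_iff]
  rintro v ⟨hv, hvdual⟩
  rw [rowSpan_eq_range_vecMulLinear] at hv
  obtain ⟨x, rfl⟩ := hv
  have hx : x ᵥ* (G * Gᵀ) = 0 ᵥ* (G * Gᵀ) := by
    rw [← mulVec_vecMul_self, zero_vecMul]
    exact (mem_dualCode_rowSpan_iff G _).mp hvdual
  rw [vecMulLinear_apply, vecMul_injective_iff_isUnit.mpr hG hx, zero_vecMul]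

theorem finrank_rowSpan_of_isUnit_mul_transpose [DecidableEq k] {G : Matrix k ι F}
    (hG : IsUnit (G * Gᵀ)) : Module.finrank F (rowSpan F G) = Fintype.card k := by
  rw [rowSpan_eq_range_vecMulLinear,
    LinearMap.finrank_range_of_inj (vecMul_injective_of_isUnit_mul_transpose hG),
    Module.finrank_fintype_fun_eq_card]

theorem dualCode_rowSpan_fromCols_one [DecidableEq k] [DecidableEq ι] (A : Matrix k ι F) :
    dualCode (rowSpan F (fromCols A (1 : Matrix k k F))) = rowSpan F (fromCols 1 (-Aᵀ)) := by
  ext v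
  obtain ⟨v₁, v₂, rfl⟩ : ∃ v₁ v₂, v = Sum.elim v₁ v₂ := ⟨_, _, (Sum.elim_comp_inl_inr v).symm⟩
  rw [mem_dualCode_rowSpan_iff, fromCols_mulVec_sumElim, one_mulVec,
    rowSpan_eq_range_vecMulLinear, LinearMap.mem_range]
  simp only [vecMulLinear_apply, vecMul_fromCols, vecMul_one, vecMul_neg, vecMul_transpose]
  constructor
  · intro h
    exact ⟨v₁, by rw [eq_neg_of_add_eq_zero_right h]⟩
  · rintro ⟨x, hx⟩
    obtain ⟨rfl, rfl⟩ : x = v₁ ∧ -(A *ᵥ x) = v₂ :=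
      ⟨congr_arg (· ∘ Sum.inl) hx, congr_arg (· ∘ Sum.inr) hx⟩
    exact add_neg_cancel _

theorem dualCode_rowSpan_fromCols_one_eq_of_mul_transpose [DecidableEq k] {A : Matrix k k F}
    {β : F} (hβ : β ≠ 0) (hA : A * Aᵀ = -β • 1) :
    dualCode (rowSpan F (fromCols A (1 : Matrix k k F))) = rowSpan F (fromCols A (β • 1)) := by
  have hAunit : IsUnit A := by
    refine (isUnit_iff_isUnit_det A).mpr (isUnit_det_of_right_inverse (B := (-β)⁻¹ • Aᵀ) ?_)
    rw [Matrix.mul_smul, hA, smul_smul, inv_mul_cancel₀ (neg_ne_zero.mpr hβ), one_smul]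
  rw [dualCode_rowSpan_fromCols_one, ← rowSpan_mul_of_isUnit hAunit, mul_fromCols, mul_one,
    mul_neg, hA, neg_smul, neg_neg]

end Codes

section Hadamard

variable {R : Type*} [CommRing R] {k : Type*} [DecidableEq k]

theorem map_intCast_smul_one (c : ℤ) :
    ((c • 1 : Matrix k k ℤ)).map (Int.cast : ℤ → R) = (c : R) • 1 := by
  rw [Matrix.map_smul' _ _ _ Int.cast_mul, Matrix.map_one _ Int.cast_zero Int.cast_one]

variable [Fintype k]

theorem add_smul_one_mul_transpose {S : Matrix k k R} {a b : R} (hS : S * Sᵀ = a • 1)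
    (hskew : S + Sᵀ = b • 1) (α : R) :
    (S + α • 1) * (S + α • 1)ᵀ = (a + α * b + α ^ 2) • 1 := by
  have hexpand : (S + α • 1) * (S + α • 1)ᵀ = S * Sᵀ + α • (S + Sᵀ) + (α * α) • 1 := by
    simp only [transpose_add, transpose_smul, transpose_one, Matrix.add_mul, Matrix.mul_add,
      Matrix.smul_mul, Matrix.mul_smul, Matrix.one_mul, Matrix.mul_one, smul_smul, smul_add]
    abel
  rw [hexpand, hS, hskew, smul_smul, ← add_smul, ← add_smul, sq]

theorem map_intCast_add_smul_one_mul_transpose {n : ℕ} {H : Matrix (Fin n) (Fin n) ℤ}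
    (hH : H * Hᵀ = (n : ℤ) • 1) (hskew : H + Hᵀ = (2 : ℤ) • 1) (α : R) :
    (H.map (Int.cast : ℤ → R) + α • 1) * (H.map (Int.cast : ℤ → R) + α • 1)ᵀ =
      ((n : R) - 1 + (α + 1) ^ 2) • 1 := by
  have hS : H.map (Int.cast : ℤ → R) * (H.map (Int.cast : ℤ → R))ᵀ = (n : R) • 1 := by
    have hmap := Matrix.map_mul (L := H) (M := Hᵀ) (f := Int.castRingHom R)
    rw [Int.coe_castRingHom] at hmap
    rw [← transpose_map, ← hmap, hH, map_intCast_smul_one, Int.cast_natCast]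
  have hskewR : H.map (Int.cast : ℤ → R) + (H.map (Int.cast : ℤ → R))ᵀ = (2 : R) • 1 := by
    rw [← transpose_map, ← Matrix.map_add _ Int.cast_add, hskew, map_intCast_smul_one,
      Int.cast_ofNat]
  rw [add_smul_one_mul_transpose hS hskewR]
  congr 1
  ring

end Hadamard

theorem statement9_general {F : Type*} [Field F] {n : ℕ}
    (H : Matrix (Fin n) (Fin n) ℤ)
    (hH : H * Hᵀ = (n : ℤ) • (1 : Matrix (Fin n) (Fin n) ℤ))
    (hskew : H + Hᵀ = (2 : ℤ) • (1 : Matrix (Fin n) (Fin n) ℤ))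
    (α β : F)
    (h1 : (n : F) + (α + 1) ^ 2 ≠ 0)
    (G Gbar : Matrix (Fin n) (Fin n ⊕ Fin n) F)
    (hG : G = Matrix.fromCols
      (H.map (Int.cast : ℤ → F) + α • (1 : Matrix (Fin n) (Fin n) F))
      (1 : Matrix (Fin n) (Fin n) F))
    (hGbar : Gbar = Matrix.fromCols
      (H.map (Int.cast : ℤ → F) + α • (1 : Matrix (Fin n) (Fin n) F))
      (β • (1 : Matrix (Fin n) (Fin n) F))) :
    (IsLCD (rowSpan F G) ∧ Module.finrank F (rowSpan F G) = n) ∧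
    ((n : F) - 1 + (α + 1) ^ 2 ≠ 0 → β + (α + 1) ^ 2 + (n : F) - 1 = 0 →
      rowSpan F Gbar = dualCode (rowSpan F G)) := by
  have hA := map_intCast_add_smul_one_mul_transpose hH hskew α
  have hGG : G * Gᵀ = ((n : F) + (α + 1) ^ 2) • 1 := by
    rw [hG, transpose_fromCols, transpose_one, fromCols_mul_fromRows, hA, Matrix.one_mul]
    module
  have hGunit : IsUnit (G * Gᵀ) := by
    rw [hGG, ← Algebra.algebraMap_eq_smul_one]
    exact h1.isUnit.map _
  refine ⟨⟨isLCD_rowSpan_of_isUnit_mul_transpose hGunit, ?_⟩, fun h2 hβ => ?_⟩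
  · rw [finrank_rowSpan_of_isUnit_mul_transpose hGunit, Fintype.card_fin]
  · have hβ' : (n : F) - 1 + (α + 1) ^ 2 = -β := by linear_combination hβ
    have hβ0 : β ≠ 0 := by
      rintro rfl
      exact h2 (by rw [hβ', neg_zero])
    rw [hβ'] at hA
    rw [hG, hGbar, dualCode_rowSpan_fromCols_one_eq_of_mul_transpose hβ0 hA]

/-- If `H` is a skew type Hadamard matrix of order `n`, `α ∈ F` and
`G = [H + α·I_n | I_n]` over the finite field `F` with `n + (α+1)² ≠ 0` in `F`, then `G`
generates an LCD code `C` of length `2n` and dimension `n`; moreover if in addition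
`n - 1 + (α+1)² ≠ 0` and `β + (α+1)² + n - 1 = 0` in `F`, then
`Ḡ = [H + α·I_n | β·I_n]` generates the dual code `C⊥`. -/
theorem statement9 {F : Type*} [Field F] [Fintype F] {n : ℕ}
    (H : Matrix (Fin n) (Fin n) ℤ)
    (hHent : ∀ i j, H i j = 1 ∨ H i j = -1)
    (hH : H * Hᵀ = (n : ℤ) • (1 : Matrix (Fin n) (Fin n) ℤ))
    (hskew : H + Hᵀ = (2 : ℤ) • (1 : Matrix (Fin n) (Fin n) ℤ))
    (α β : F)
    (h1 : (n : F) + (α + 1) ^ 2 ≠ 0)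
    (G Gbar : Matrix (Fin n) (Fin n ⊕ Fin n) F)
    (hG : G = Matrix.fromCols
      (H.map (Int.cast : ℤ → F) + α • (1 : Matrix (Fin n) (Fin n) F))
      (1 : Matrix (Fin n) (Fin n) F))
    (hGbar : Gbar = Matrix.fromCols
      (H.map (Int.cast : ℤ → F) + α • (1 : Matrix (Fin n) (Fin n) F))
      (β • (1 : Matrix (Fin n) (Fin n) F))) :
    (IsLCD (rowSpan F G) ∧ Module.finrank F (rowSpan F G) = n) ∧
    ((n : F) - 1 + (α + 1) ^ 2 ≠ 0 → β + (α + 1) ^ 2 + (n : F) - 1 = 0 →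
      rowSpan F Gbar = dualCode (rowSpan F G)) :=
  statement9_general H hH hskew α β h1 G Gbar hG hGbar
end

section
/- Let W be a weighing matrix W(n,m) and let G be a group of permutation automorphisms of W acting with t row orbits and t column orbits, all of the same length, and let R be the t×t row orbit matrix of W with respect to G. If m + 1 ≠ 0 in F_q, then A = [R|I_t] (over F_q) generates an LCD code C of length 2t and dimension t over F_q. Moreover, if in addition m ≠ 0 in F_q and α ∈ F_q satisfies α + m = 0, then Ā = [R|α·I_t] generates the dual code C⊥, and C is formally self-dual: for every w, the number of codewords of Hamming weight w in C equals the number of codewords of Hamming weight w in C⊥. -/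
open Matrix BigOperators

/-- `(σ, τ)` is a permutation automorphism of the square matrix `M` if permuting the rows
by `σ` and the columns by `τ` leaves `M` unchanged, i.e. `M (σ i) (τ j) = M i j`. -/
def IsPermAut {n : ℕ} {R : Type*} (M : Matrix (Fin n) (Fin n) R)
    (g : Equiv.Perm (Fin n) × Equiv.Perm (Fin n)) : Prop :=
  ∀ i j, M (g.1 i) (g.2 j) = M i j

/-!
Double counting the entries of `W` over a block `R i × C j`: all rows of the block have the same
sum and so do all columns (by invariance under `G`), and `|R i| = |C j|`, so the two sums agree.
This turns `W Wᵀ = m I` into `Γ Γᵀ = m I` for the row orbit matrix `Γ`. Then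
`A Aᵀ = (m + 1) I` is invertible, which makes the code LCD, and `A Āᵀ = (m + α) I = 0`, so `Ā`
spans the dual by a dimension count. Finally `Ā = A · diag(1, …, 1, α, …, α)`, and scaling
coordinates by nonzero constants preserves Hamming weights.
-/

theorem Finset.sum_sum_eq_sum_of_existsUnique_mem {ι α M : Type*} [Fintype ι] [Fintype α]
    [AddCommMonoid M] {P : ι → Finset α} (hP : ∀ a, ∃! i, a ∈ P i) (f : α → M) :
    ∑ i, ∑ a ∈ P i, f a = ∑ a, f a := by
  classical
  calc ∑ i, ∑ a ∈ P i, f a = ∑ i, ∑ a, if a ∈ P i then f a else 0 := by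
        simp only [Finset.sum_ite_mem, Finset.univ_inter]
    _ = ∑ a, ∑ i, if a ∈ P i then f a else 0 := Finset.sum_comm
    _ = ∑ a, f a := Finset.sum_congr rfl fun a _ => by
        obtain ⟨i, hi, huniq⟩ := hP a
        rw [Finset.sum_eq_single i (fun j _ hji => if_neg fun h => hji (huniq j h))
          (by simp), if_pos hi]

section RowOrbitMatrix

variable {n : ℕ} {M : Type*} {W : Matrix (Fin n) (Fin n) M}
  {G : Subgroup (Equiv.Perm (Fin n) × Equiv.Perm (Fin n))}

def rowOrbitMatrix [AddCommMonoid M] (W : Matrix (Fin n) (Fin n) M) {t : ℕ}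
    (C : Fin t → Finset (Fin n)) (ρ : Fin t → Fin n) : Matrix (Fin t) (Fin t) M :=
  of fun i j => ∑ z ∈ C j, W (ρ i) z

theorem sum_apply_perm_fst_eq [AddCommMonoid M] (hG : ∀ g ∈ G, IsPermAut W g)
    {S : Finset (Fin n)} (hS : ∀ g ∈ G, ∀ z ∈ S, g.2 z ∈ S) {g} (hg : g ∈ G) (x : Fin n) :
    ∑ z ∈ S, W (g.1 x) z = ∑ z ∈ S, W x z :=
  Finset.sum_nbij' (fun z => (g⁻¹).2 z) (fun z => g.2 z) (hS _ (inv_mem hg)) (hS g hg)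
    (by simp) (by simp) fun z _ => by simpa using (hG g⁻¹ (inv_mem hg) (g.1 x) z).symm

theorem sum_apply_perm_snd_eq [AddCommMonoid M] (hG : ∀ g ∈ G, IsPermAut W g)
    {S : Finset (Fin n)} (hS : ∀ g ∈ G, ∀ x ∈ S, g.1 x ∈ S) {g} (hg : g ∈ G) (z : Fin n) :
    ∑ x ∈ S, W x (g.2 z) = ∑ x ∈ S, W x z :=
  Finset.sum_nbij' (fun x => (g⁻¹).1 x) (fun x => g.1 x) (hS _ (inv_mem hg)) (hS g hg)
    (by simp) (by simp) fun x _ => by simpa using (hG g⁻¹ (inv_mem hg) x (g.2 z)).symm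

theorem sum_row_orbit_eq_sum_col_orbit [AddCommMonoid M] [IsAddTorsionFree M]
    (hG : ∀ g ∈ G, IsPermAut W g) {R C : Finset (Fin n)}
    (hR : ∀ x ∈ R, ∀ u, u ∈ R ↔ ∃ g ∈ G, g.1 x = u)
    (hC : ∀ y ∈ C, ∀ z, z ∈ C ↔ ∃ g ∈ G, g.2 y = z) (hcard : R.card = C.card)
    {x z : Fin n} (hx : x ∈ R) (hz : z ∈ C) :
    ∑ z' ∈ C, W x z' = ∑ x' ∈ R, W x' z := by
  have hRstable : ∀ g ∈ G, ∀ x ∈ R, g.1 x ∈ R := fun g hg x hx => (hR x hx _).2 ⟨g, hg, rfl⟩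
  have hCstable : ∀ g ∈ G, ∀ z ∈ C, g.2 z ∈ C := fun g hg z hz => (hC z hz _).2 ⟨g, hg, rfl⟩
  have hrow : ∀ x' ∈ R, ∑ z' ∈ C, W x' z' = ∑ z' ∈ C, W x z' := by
    intro x' hx'
    obtain ⟨g, hg, rfl⟩ := (hR x hx x').1 hx'
    exact sum_apply_perm_fst_eq hG hCstable hg x
  have hcol : ∀ z' ∈ C, ∑ x' ∈ R, W x' z' = ∑ x' ∈ R, W x' z := by
    intro z' hz'
    obtain ⟨g, hg, rfl⟩ := (hC z hz z').1 hz'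
    exact sum_apply_perm_snd_eq hG hRstable hg z
  refine IsAddTorsionFree.nsmul_right_injective (Finset.card_ne_zero_of_mem hx) ?_
  calc R.card • ∑ z' ∈ C, W x z' = ∑ x' ∈ R, ∑ z' ∈ C, W x' z' := by
        rw [Finset.sum_congr rfl hrow, Finset.sum_const]
    _ = ∑ z' ∈ C, ∑ x' ∈ R, W x' z' := Finset.sum_comm
    _ = R.card • ∑ x' ∈ R, W x' z := by rw [Finset.sum_congr rfl hcol, Finset.sum_const, hcard]

theorem rowOrbitMatrix_mul_transpose [Semiring M] [IsAddTorsionFree M] {c : M}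
    (hW : W * Wᵀ = c • (1 : Matrix (Fin n) (Fin n) M)) (hG : ∀ g ∈ G, IsPermAut W g)
    {t : ℕ} {R C : Fin t → Finset (Fin n)}
    (hRorb : ∀ i, ∀ x ∈ R i, ∀ u, u ∈ R i ↔ ∃ g ∈ G, g.1 x = u)
    (hRpart : ∀ x : Fin n, ∃! i, x ∈ R i)
    (hCorb : ∀ j, ∀ y ∈ C j, ∀ z, z ∈ C j ↔ ∃ g ∈ G, g.2 y = z)
    (hCpart : ∀ y : Fin n, ∃! j, y ∈ C j)
    (hcard : ∀ i j, (R i).card = (C j).card) {ρ : Fin t → Fin n} (hρ : ∀ i, ρ i ∈ R i) :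
    rowOrbitMatrix W C ρ * (rowOrbitMatrix W C ρ)ᵀ = c • (1 : Matrix (Fin t) (Fin t) M) := by
  ext i k
  have hρR : ρ i ∈ R k ↔ i = k :=
    ⟨fun h => (hRpart (ρ i)).unique (hρ i) h, fun h => h ▸ hρ i⟩
  calc (rowOrbitMatrix W C ρ * (rowOrbitMatrix W C ρ)ᵀ) i k
      = ∑ j, ∑ z ∈ C j, W (ρ i) z * ∑ x ∈ R k, W x z := by
        simp only [mul_apply, transpose_apply, rowOrbitMatrix, of_apply, Finset.sum_mul]
        refine Finset.sum_congr rfl fun j _ => Finset.sum_congr rfl fun z hz => ?_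
        rw [sum_row_orbit_eq_sum_col_orbit hG (hRorb k) (hCorb j) (hcard k j) (hρ k) hz]
    _ = ∑ z, W (ρ i) z * ∑ x ∈ R k, W x z :=
        Finset.sum_sum_eq_sum_of_existsUnique_mem hCpart _
    _ = ∑ x ∈ R k, (W * Wᵀ) (ρ i) x := by
        simp only [mul_apply, transpose_apply, Finset.mul_sum]
        exact Finset.sum_comm
    _ = (c • (1 : Matrix (Fin t) (Fin t) M)) i k := by
        simp [hW, one_apply, Finset.sum_ite_eq, hρR]

end RowOrbitMatrix

section Codes

variable {F : Type*} [Field F] {k ι : Type*} [Fintype k]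

theorem dualCode_rowSpan [Fintype ι] (G : Matrix k ι F) :
    dualCode (rowSpan F G) = LinearMap.ker G.mulVecLin := by
  ext v
  rw [LinearMap.mem_ker, mulVecLin_apply, ← dotProduct_eq_zero_iff]
  change (∀ c ∈ rowSpan F G, _) ↔ _
  simp only [rowSpan_eq_range_vecMulLinear, LinearMap.mem_range, vecMulLinear_apply,
    forall_exists_index, forall_apply_eq_imp_iff]
  simp only [dotProduct_comm v, ← dotProduct_mulVec, dotProduct_comm _ (G *ᵥ v)]

theorem finrank_dualCode_rowSpan_add [Fintype ι] (G : Matrix k ι F) :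
    Module.finrank F (dualCode (rowSpan F G)) + Module.finrank F (rowSpan F G) =
      Fintype.card ι := by
  have hrank : Module.finrank F (rowSpan F G) = G.rank := (rank_eq_finrank_span_row G).symm
  rw [dualCode_rowSpan, hrank, Matrix.rank, add_comm,
    LinearMap.finrank_range_add_finrank_ker, Module.finrank_fintype_fun_eq_card]

/-- One direction of Massey's criterion. -/
theorem isLCD_rowSpan_of_isUnit [Fintype ι] [DecidableEq k] (G : Matrix k ι F)
    (h : IsUnit (G * Gᵀ)) : IsLCD (rowSpan F G) := by
  rw [IsLCD, eq_bot_iff]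
  rintro _ ⟨hv, hv'⟩
  rw [rowSpan_eq_range_vecMulLinear] at hv
  obtain ⟨u, rfl⟩ := hv
  rw [SetLike.mem_coe, dualCode_rowSpan, LinearMap.mem_ker, mulVecLin_apply, vecMulLinear_apply,
    mulVec_vecMul, ← mulVec_zero (G * Gᵀ)] at hv'
  rw [vecMulLinear_apply, mulVec_injective_iff_isUnit.2 h hv', zero_vecMul]
  exact zero_mem _

theorem rowSpan_le_dualCode_of_mul_transpose_eq_zero [Fintype ι] {k' : Type*} [Fintype k']
    {G : Matrix k ι F} {H : Matrix k' ι F} (h : G * Hᵀ = 0) :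
    rowSpan F H ≤ dualCode (rowSpan F G) := by
  rintro _ hv
  rw [rowSpan_eq_range_vecMulLinear] at hv
  obtain ⟨u, rfl⟩ := hv
  rw [dualCode_rowSpan, LinearMap.mem_ker, mulVecLin_apply, vecMulLinear_apply, mulVec_vecMul,
    h, zero_mulVec]

theorem rowSpan_mul_diagonal [Fintype ι] [DecidableEq ι] (G : Matrix k ι F) (s : ι → F) :
    rowSpan F (G * diagonal s) = (rowSpan F G).map (diagonal s).vecMulLinear := by
  rw [rowSpan_eq_range_vecMulLinear, rowSpan_eq_range_vecMulLinear, ← LinearMap.range_comp]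
  congr 1
  ext u : 1
  simp [vecMul_vecMul]

theorem hammingNorm_vecMul_diagonal [Fintype ι] [DecidableEq ι] [DecidableEq F] {s : ι → F}
    (hs : ∀ i, s i ≠ 0) (v : ι → F) : hammingNorm (v ᵥ* diagonal s) = hammingNorm v := by
  rw [show v ᵥ* diagonal s = fun i => v i * s i from funext (vecMul_diagonal v s)]
  exact hammingNorm_comp (fun i c => c * s i) (fun i => mul_left_injective₀ (hs i))
    (fun _ => zero_mul _)

theorem ncard_weight_rowSpan_mul_diagonal [Fintype ι] [DecidableEq ι] [DecidableEq F]
    (G : Matrix k ι F) {s : ι → F} (hs : ∀ i, s i ≠ 0) (w : ℕ) :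
    {c ∈ (rowSpan F (G * diagonal s) : Set (ι → F)) | hammingNorm c = w}.ncard =
      {c ∈ (rowSpan F G : Set (ι → F)) | hammingNorm c = w}.ncard := by
  have hinj : Function.Injective (diagonal s).vecMulLinear := fun u v huv =>
    funext fun i => mul_left_injective₀ (hs i) <| by
      simpa only [vecMulLinear_apply, vecMul_diagonal] using congrFun huv i
  have hpre : (diagonal s).vecMulLinear ⁻¹' {c | hammingNorm c = w} = {c | hammingNorm c = w} := by
    ext v
    simp [hammingNorm_vecMul_diagonal hs]
  rw [rowSpan_mul_diagonal, Submodule.map_coe]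
  change (_ '' _ ∩ {c | hammingNorm c = w}).ncard =
    ((rowSpan F G : Set (ι → F)) ∩ {c | hammingNorm c = w}).ncard
  rw [← Set.image_inter_preimage, hpre, Set.ncard_image_of_injective _ hinj]

end Codes

section SystematicCodes

variable {F : Type*} [Field F] {k : Type*} [Fintype k] [DecidableEq k]

theorem fromCols_smul_one_mul_transpose (M : Matrix k k F) (a b : F) :
    fromCols M (a • (1 : Matrix k k F)) * (fromCols M (b • (1 : Matrix k k F)))ᵀ = M * Mᵀ + (a * b) • 1 := by
  rw [transpose_fromCols, fromCols_mul_fromRows, transpose_smul, transpose_one, smul_mul_smul,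
    mul_one]

theorem fromCols_smul_one_mul_diagonal (M : Matrix k k F) (a b : F) :
    (fromCols M (a • 1) : Matrix k (k ⊕ k) F) *
        (diagonal (Sum.elim 1 fun _ => b) : Matrix (k ⊕ k) (k ⊕ k) F) =
      fromCols M ((a * b) • (1 : Matrix k k F)) := by
  ext i (j | j) <;> simp [mul_diagonal, one_apply]

theorem finrank_rowSpan_fromCols_smul_one (M : Matrix k k F) {c : F} (hc : c ≠ 0) :
    Module.finrank F (rowSpan F (fromCols M (c • (1 : Matrix k k F)))) = Fintype.card k := by
  rw [rowSpan_eq_range_vecMulLinear, LinearMap.finrank_range_of_inj,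
    Module.finrank_fintype_fun_eq_card]
  intro u v huv
  have h := congrArg (fun x => x ∘ Sum.inr) huv
  simp only [vecMulLinear_apply, vecMul_fromCols, Sum.elim_comp_inr, vecMul_smul, vecMul_one] at h
  exact smul_right_injective _ hc h

theorem rowSpan_fromCols_smul_one_eq_dualCode {M : Matrix k k F} {m a b : F}
    (hM : M * Mᵀ = m • 1) (ha : a ≠ 0) (hb : b ≠ 0) (hab : m + a * b = 0) :
    rowSpan F (fromCols M (b • (1 : Matrix k k F))) = dualCode (rowSpan F (fromCols M (a • (1 : Matrix k k F)))) := by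
  refine Submodule.eq_of_le_of_finrank_eq (rowSpan_le_dualCode_of_mul_transpose_eq_zero ?_) ?_
  · rw [fromCols_smul_one_mul_transpose, hM, ← add_smul, hab, zero_smul]
  · have h := finrank_dualCode_rowSpan_add (fromCols M (a • (1 : Matrix k k F)))
    rw [finrank_rowSpan_fromCols_smul_one M ha, Fintype.card_sum] at h
    rw [finrank_rowSpan_fromCols_smul_one M hb]
    omega

end SystematicCodes

theorem statement19_general {F : Type*} [Field F] [DecidableEq F] {n m t l : ℕ}
    (W : Matrix (Fin n) (Fin n) ℤ)
    (hW : W * Wᵀ = (m : ℤ) • (1 : Matrix (Fin n) (Fin n) ℤ))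
    (G : Subgroup (Equiv.Perm (Fin n) × Equiv.Perm (Fin n)))
    (hG : ∀ g ∈ G, IsPermAut W g)
    (R : Fin t → Finset (Fin n))
    (hRorb : ∀ i, ∀ x ∈ R i, ∀ u, u ∈ R i ↔ ∃ g ∈ G, g.1 x = u)
    (hRpart : ∀ x : Fin n, ∃! i, x ∈ R i)
    (C : Fin t → Finset (Fin n))
    (hCorb : ∀ j, ∀ y ∈ C j, ∀ z, z ∈ C j ↔ ∃ g ∈ G, g.2 y = z)
    (hCpart : ∀ y : Fin n, ∃! j, y ∈ C j)
    (hRlen : ∀ i, (R i).card = l) (hClen : ∀ j, (C j).card = l)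
    (ρ : Fin t → Fin n) (hρ : ∀ i, ρ i ∈ R i)
    (hm1 : (m : F) + 1 ≠ 0)
    (A : Matrix (Fin t) (Fin t ⊕ Fin t) F)
    (hA : A = Matrix.fromCols
      ((Matrix.of fun i j => ∑ z ∈ C j, W (ρ i) z).map (Int.cast : ℤ → F))
      (1 : Matrix (Fin t) (Fin t) F)) :
    (IsLCD (rowSpan F A) ∧ Module.finrank F (rowSpan F A) = t) ∧
    ((m : F) ≠ 0 → ∀ α : F, α + (m : F) = 0 →
      (rowSpan F (Matrix.fromCols
        ((Matrix.of fun i j => ∑ z ∈ C j, W (ρ i) z).map (Int.cast : ℤ → F))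
        (α • (1 : Matrix (Fin t) (Fin t) F))) = dualCode (rowSpan F A)) ∧
      ∀ w : ℕ,
        {c ∈ (rowSpan F A : Set ((Fin t ⊕ Fin t) → F)) | hammingNorm c = w}.ncard =
        {c ∈ (dualCode (rowSpan F A) : Set ((Fin t ⊕ Fin t) → F)) | hammingNorm c = w}.ncard) := by
  set Γ := (Matrix.of fun i j => ∑ z ∈ C j, W (ρ i) z).map (Int.cast : ℤ → F)
  have hΓ : Γ * Γᵀ = (m : F) • 1 := by
    have h := rowOrbitMatrix_mul_transpose hW hG hRorb hRpart hCorb hCpart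
      (fun i j => (hRlen i).trans (hClen j).symm) hρ
    change (rowOrbitMatrix W C ρ).map (Int.castRingHom F) *
      ((rowOrbitMatrix W C ρ).map (Int.castRingHom F))ᵀ = _
    rw [← transpose_map, ← Matrix.map_mul, h]
    ext i j
    simp only [map_apply, Matrix.smul_apply, one_apply, smul_ite, smul_zero]
    split_ifs <;> simp
  rw [← one_smul F (1 : Matrix (Fin t) (Fin t) F)] at hA
  subst hA
  refine ⟨⟨isLCD_rowSpan_of_isUnit _ ?_, ?_⟩, fun hm0 α hα => ?_⟩
  · rw [fromCols_smul_one_mul_transpose, hΓ, mul_one, ← add_smul, ← Algebra.algebraMap_eq_smul_one]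
    exact hm1.isUnit.map _
  · rw [finrank_rowSpan_fromCols_smul_one Γ one_ne_zero, Fintype.card_fin]
  have hα0 : α ≠ 0 := fun h => hm0 (by simpa [h] using hα)
  have hdual := rowSpan_fromCols_smul_one_eq_dualCode hΓ one_ne_zero hα0
    (by rw [one_mul, add_comm, hα])
  refine ⟨hdual, fun w => ?_⟩
  rw [← hdual, ← one_mul α, ← fromCols_smul_one_mul_diagonal Γ 1 α,
    ncard_weight_rowSpan_mul_diagonal]
  rintro (i | i) <;> simp [hα0]

/-- Let `W` be a weighing matrix `W(n,m)`, let `G` be a group of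
permutation automorphisms of `W` acting with `t` row orbits and `t` column orbits, all of
the same length `l`, and let `R` be the `t × t` row orbit matrix of `W`.  If `m + 1 ≠ 0`
in `F`, then `A = [R | I_t]` generates an LCD code `C` of length `2t` and dimension `t`
over `F`.  Moreover, if in addition `m ≠ 0` in `F` and `α + m = 0`, then
`Ā = [R | α·I_t]` generates the dual code `C⊥`, and `C` is formally self-dual: for every
`w`, the number of codewords of weight `w` in `C` equals that in `C⊥`. -/
theorem statement19 {F : Type*} [Field F] [Fintype F] [DecidableEq F] {n m t l : ℕ}
    (W : Matrix (Fin n) (Fin n) ℤ)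
    (hWent : ∀ i j, W i j = 0 ∨ W i j = 1 ∨ W i j = -1)
    (hW : W * Wᵀ = (m : ℤ) • (1 : Matrix (Fin n) (Fin n) ℤ))
    (G : Subgroup (Equiv.Perm (Fin n) × Equiv.Perm (Fin n)))
    (hG : ∀ g ∈ G, IsPermAut W g)
    (R : Fin t → Finset (Fin n))
    (hRorb : ∀ i, ∀ x ∈ R i, ∀ u, u ∈ R i ↔ ∃ g ∈ G, g.1 x = u)
    (hRpart : ∀ x : Fin n, ∃! i, x ∈ R i)
    (C : Fin t → Finset (Fin n))
    (hCorb : ∀ j, ∀ y ∈ C j, ∀ z, z ∈ C j ↔ ∃ g ∈ G, g.2 y = z)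
    (hCpart : ∀ y : Fin n, ∃! j, y ∈ C j)
    (hRlen : ∀ i, (R i).card = l) (hClen : ∀ j, (C j).card = l)
    (ρ : Fin t → Fin n) (hρ : ∀ i, ρ i ∈ R i)
    (hm1 : (m : F) + 1 ≠ 0)
    (A : Matrix (Fin t) (Fin t ⊕ Fin t) F)
    (hA : A = Matrix.fromCols
      ((Matrix.of fun i j => ∑ z ∈ C j, W (ρ i) z).map (Int.cast : ℤ → F))
      (1 : Matrix (Fin t) (Fin t) F)) :
    (IsLCD (rowSpan F A) ∧ Module.finrank F (rowSpan F A) = t) ∧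
    ((m : F) ≠ 0 → ∀ α : F, α + (m : F) = 0 →
      (rowSpan F (Matrix.fromCols
        ((Matrix.of fun i j => ∑ z ∈ C j, W (ρ i) z).map (Int.cast : ℤ → F))
        (α • (1 : Matrix (Fin t) (Fin t) F))) = dualCode (rowSpan F A)) ∧
      ∀ w : ℕ,
        {c ∈ (rowSpan F A : Set ((Fin t ⊕ Fin t) → F)) | hammingNorm c = w}.ncard =
        {c ∈ (dualCode (rowSpan F A) : Set ((Fin t ⊕ Fin t) → F)) | hammingNorm c = w}.ncard) :=
  statement19_general W hW G hG R hRorb hRpart C hCorb hCpart hRlen hClen ρ hρ hm1 A hA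
end
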